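/- arXiv:1610.06814 — 3 statements merged into one kernel-verified Lean document; each statement's English description precedes it below -/
import Mathlib

section
/- Let u_0 ∈ ℝ, f ∈ L²(0,T), and let 0 = t_0 < t_1 < ⋯ < t_N = T with τ_n = t_n − t_{n−1}. Define U_0 = u_0 and, for n = 1, …, N, f_n = (1/τ_n)∫_{t_{n−1}}^{t_n} f dt and U_n = (U_{n−1} + τ_n f_n)/(1 + τ_n) (implicit Euler for ∂_t u + u = f). Then ∑_{n=1}^N |U_n − U_{n−1}|² ≤ ∫_0^T |f|² dt + |u_0|². -/
/-!
One implicit Euler step `U = (a + τ F) / (1 + τ)` satisfies `U - a = τ (F - U)`, whence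
`a² + τ F² - (U - a)² - U² = τ (U² + (U - F)²) ≥ 0`: the squared increment is paid for by the drop
of `U²` plus `τ F²`. By Jensen's inequality `τ fₙ² ≤ ∫_{tₙ₋₁}^{tₙ} f²`, and summing over the steps
the `U²` terms telescope to `u₀² - U_N² ≤ u₀²`.
-/

open MeasureTheory

lemma implicitEuler_step_sq_le {τ a F : ℝ} (hτ : 0 ≤ τ) :
    ((a + τ * F) / (1 + τ) - a) ^ 2 + ((a + τ * F) / (1 + τ)) ^ 2 ≤ a ^ 2 + τ * F ^ 2 := by
  set U := (a + τ * F) / (1 + τ) with hU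
  have hstep : U - a = τ * (F - U) := by
    rw [hU]
    field_simp
    ring
  have hgap : a ^ 2 + τ * F ^ 2 - ((U - a) ^ 2 + U ^ 2) = τ * (U ^ 2 + (U - F) ^ 2) := by
    have ha : a = U - τ * (F - U) := by linarith
    rw [ha]
    ring
  linarith [mul_nonneg hτ (add_nonneg (sq_nonneg U) (sq_nonneg (U - F)))]

lemma sq_interval_average_le_interval_average_sq {f : ℝ → ℝ} {a b : ℝ} (hab : a < b)
    (hf : IntervalIntegrable f volume a b)
    (hf2 : IntervalIntegrable (fun s => f s ^ 2) volume a b) :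
    (⨍ s in a..b, f s) ^ 2 ≤ ⨍ s in a..b, f s ^ 2 := by
  have hvol : volume (Set.uIoc a b) ≠ 0 := by simp [Set.uIoc_of_le hab.le, hab]
  exact (even_two.convexOn_pow (𝕜 := ℝ)).map_set_average_le (continuousOn_pow 2) isClosed_univ
    hvol (by simp [Set.uIoc_of_le hab.le]) (by simp) hf.def' hf2.def'

lemma mul_sq_interval_mean_le_integral_sq {f : ℝ → ℝ} {a b : ℝ} (hab : a < b)
    (hf : IntervalIntegrable f volume a b)
    (hf2 : IntervalIntegrable (fun s => f s ^ 2) volume a b) :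
    (b - a) * ((1 / (b - a)) * ∫ s in a..b, f s) ^ 2 ≤ ∫ s in a..b, f s ^ 2 := by
  have hjensen := sq_interval_average_le_interval_average_sq hab hf hf2
  rw [interval_average_eq_div, interval_average_eq_div, le_div_iff₀ (sub_pos.mpr hab)] at hjensen
  calc (b - a) * ((1 / (b - a)) * ∫ s in a..b, f s) ^ 2
      = ((∫ s in a..b, f s) / (b - a)) ^ 2 * (b - a) := by ring
    _ ≤ ∫ s in a..b, f s ^ 2 := hjensen

lemma implicitEuler_step_energy_le {f : ℝ → ℝ} {a b : ℝ} (hab : a < b)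
    (hf : IntervalIntegrable f volume a b)
    (hf2 : IntervalIntegrable (fun s => f s ^ 2) volume a b) {U V : ℝ}
    (hV : V = (U + (b - a) * ((1 / (b - a)) * ∫ s in a..b, f s)) / (1 + (b - a))) :
    (V - U) ^ 2 ≤ (U ^ 2 - V ^ 2) + ∫ s in a..b, f s ^ 2 := by
  have hstep := implicitEuler_step_sq_le (a := U) (F := (1 / (b - a)) * ∫ s in a..b, f s)
    (sub_pos.mpr hab).le
  rw [← hV] at hstep
  linarith [mul_sq_interval_mean_le_integral_sq hab hf hf2]

lemma uIcc_subset_uIcc_of_monotoneOn_Iic {α : Type*} [Lattice α] {t : ℕ → α} {N m n : ℕ}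
    (ht : MonotoneOn t (Set.Iic N)) (hmn : m ≤ n) (hn : n ≤ N) :
    Set.uIcc (t m) (t n) ⊆ Set.uIcc (t 0) (t N) := by
  have hm : m ≤ N := hmn.trans hn
  have h0 : (0 : ℕ) ∈ Set.Iic N := Nat.zero_le N
  have hN : N ∈ Set.Iic N := le_refl N
  exact Set.uIcc_subset_uIcc
    (Set.mem_uIcc_of_le (ht h0 hm (Nat.zero_le m)) (ht hm hN hm))
    (Set.mem_uIcc_of_le (ht h0 hn (Nat.zero_le n)) (ht hn hN hn))

theorem stmt1_general (T : ℝ) (N : ℕ)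
    (t : ℕ → ℝ) (ht0 : t 0 = 0) (htN : t N = T)
    (hmono : ∀ n < N, t n < t (n + 1))
    (f : ℝ → ℝ)
    (hf : IntervalIntegrable f volume 0 T)
    (hf2 : IntervalIntegrable (fun s => (f s) ^ 2) volume 0 T)
    (u0 : ℝ) (U : ℕ → ℝ) (hU0 : U 0 = u0)
    (hU : ∀ n < N,
      U (n + 1) =
        (U n + (t (n + 1) - t n) *
          ((1 / (t (n + 1) - t n)) * ∫ s in (t n)..(t (n + 1)), f s)) /
          (1 + (t (n + 1) - t n))) :
    ∑ n ∈ Finset.range N, (U (n + 1) - U n) ^ 2 ≤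
      (∫ s in (0:ℝ)..T, (f s) ^ 2) + u0 ^ 2 := by
  have ht : MonotoneOn t (Set.Iic N) :=
    (strictMonoOn_Iic_of_lt_succ fun m hm => by simpa using hmono m hm).monotoneOn
  have hsub : ∀ n < N, Set.uIcc (t n) (t (n + 1)) ⊆ Set.uIcc 0 T := fun n hn => by
    simpa only [ht0, htN] using uIcc_subset_uIcc_of_monotoneOn_Iic ht n.le_succ hn
  have hf2' : ∀ n < N, IntervalIntegrable (fun s => f s ^ 2) volume (t n) (t (n + 1)) :=
    fun n hn => hf2.mono_set (hsub n hn)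
  calc ∑ n ∈ Finset.range N, (U (n + 1) - U n) ^ 2
      ≤ ∑ n ∈ Finset.range N,
          ((U n ^ 2 - U (n + 1) ^ 2) + ∫ s in (t n)..(t (n + 1)), f s ^ 2) :=
        Finset.sum_le_sum fun n hn =>
          have hn := Finset.mem_range.mp hn
          implicitEuler_step_energy_le (hmono n hn) (hf.mono_set (hsub n hn)) (hf2' n hn) (hU n hn)
    _ = (U 0 ^ 2 - U N ^ 2) + ∫ s in (t 0)..(t N), f s ^ 2 := by
        rw [Finset.sum_add_distrib, Finset.sum_range_sub' (fun n => U n ^ 2),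
          intervalIntegral.sum_integral_adjacent_intervals hf2']
    _ ≤ (∫ s in (0:ℝ)..T, (f s) ^ 2) + u0 ^ 2 := by
        rw [ht0, htN, hU0]
        linarith [sq_nonneg (U N)]

/-- Uniform energy estimate for the implicit Euler (dG(0)) discretisation of
`∂ₜ u + u = f`, `u(0) = u₀`, with `fₙ` the mean value of `f` on the n-th interval. -/
theorem stmt1 (T : ℝ) (hT : 0 < T) (N : ℕ) (hN : 0 < N)
    (t : ℕ → ℝ) (ht0 : t 0 = 0) (htN : t N = T)
    (hmono : ∀ n < N, t n < t (n + 1))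
    (f : ℝ → ℝ)
    (hf : IntervalIntegrable f volume 0 T)
    (hf2 : IntervalIntegrable (fun s => (f s) ^ 2) volume 0 T)
    (u0 : ℝ) (U : ℕ → ℝ) (hU0 : U 0 = u0)
    (hU : ∀ n < N,
      U (n + 1) =
        (U n + (t (n + 1) - t n) *
          ((1 / (t (n + 1) - t n)) * ∫ s in (t n)..(t (n + 1)), f s)) /
          (1 + (t (n + 1) - t n))) :
    ∑ n ∈ Finset.range N, (U (n + 1) - U n) ^ 2 ≤
      (∫ s in (0:ℝ)..T, (f s) ^ 2) + u0 ^ 2 :=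
  stmt1_general T N t ht0 htN hmono f hf hf2 u0 U hU0 hU
end

section
/- Let H be a real Hilbert space, V ⊆ H a closed subspace with orthogonal projection Π : H → V, and ‖·‖_E an equivalent Hilbert norm on H induced by a continuous symmetric coercive bilinear form B. Let u⁻ ∈ H, τ > 0, f̄ ∈ H, and suppose U ∈ V satisfies (1/τ)⟨U − u⁻, V⟩_H + B(U, V) = ⟨f̄, V⟩_H for all V ∈ V (backward Euler step). Then (1/τ)‖U − Π u⁻‖_H² + ‖U‖_E² − ‖Π u⁻‖_E² + ‖U − Π u⁻‖_E² · 0 ≤ τ‖f̄‖_H², and more precisely ‖Π(U − u⁻)/τ‖_H²·τ + ‖U − Π u⁻‖_E² + ‖U‖_E² − ‖Π u⁻‖_E² ≤ τ‖f̄‖_H². -/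
open MeasureTheory
open scoped RealInnerProductSpace

lemma LinearMap.add_apply_self_sub_eq_two_mul_apply_sub {R M : Type*} [CommRing R]
    [AddCommGroup M] [Module R M] (B : M →ₗ[R] M →ₗ[R] R) (hsymm : ∀ x y, B x y = B y x)
    (u p : M) : B (u - p) (u - p) + B u u - B p p = 2 * B u (u - p) := by
  simp only [map_sub, LinearMap.sub_apply, hsymm p u]
  ring

lemma two_mul_le_add_div_of_pos {τ : ℝ} (hτ : 0 < τ) (a b : ℝ) :
    2 * (b * a) ≤ τ * b ^ 2 + a ^ 2 / τ := by
  have hsq : 0 ≤ (τ * b - a) ^ 2 / τ := by positivity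
  have hexp : (τ * b - a) ^ 2 / τ = τ * b ^ 2 - 2 * (b * a) + a ^ 2 / τ := by
    field_simp
    ring
  linarith

namespace Submodule

variable {H : Type*} [NormedAddCommGroup H] [InnerProductSpace ℝ H]
  (V : Submodule ℝ H) [V.HasOrthogonalProjection]

lemma inner_sub_sub_starProjection_of_mem {U : H} (hU : U ∈ V) (x : H) :
    ⟪U - x, U - V.starProjection x⟫ = ‖U - V.starProjection x‖ ^ 2 := by
  have hmem : U - V.starProjection x ∈ V := V.sub_mem hU (V.starProjection_apply_mem x)
  have hdecomp : U - x = (U - V.starProjection x) - (x - V.starProjection x) := by abel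
  rw [hdecomp, inner_sub_left, V.starProjection_inner_eq_zero x _ hmem,
    real_inner_self_eq_norm_sq, sub_zero]

lemma starProjection_sub_of_mem {U : H} (hU : U ∈ V) (x : H) :
    V.starProjection (U - x) = U - V.starProjection x := by
  rw [map_sub, V.starProjection_eq_self_iff.2 hU]

/-- Test with `W = U - Π u⁻ ∈ V`: orthogonality of `u⁻ - Π u⁻` to `V` turns the time term into
`‖W‖² / τ`, polarization turns `2 B(U, W)` into the energy terms, and Cauchy–Schwarz with Young
absorbs the right-hand side. -/
theorem backwardEuler_energy_estimate (B : H →ₗ[ℝ] H →ₗ[ℝ] ℝ)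
    (hsymm : ∀ x y, B x y = B y x) {τ : ℝ} (hτ : 0 < τ) {um fbar U : H} (hU : U ∈ V)
    (heq : ∀ W ∈ V, (1 / τ) * ⟪U - um, W⟫ + B U W = ⟪fbar, W⟫) :
    (1 / τ) * ‖U - V.starProjection um‖ ^ 2
        + B (U - V.starProjection um) (U - V.starProjection um)
        + B U U - B (V.starProjection um) (V.starProjection um)
      ≤ τ * ‖fbar‖ ^ 2 := by
  set p := V.starProjection um
  have htest := heq (U - p) (V.sub_mem hU (V.starProjection_apply_mem um))
  rw [V.inner_sub_sub_starProjection_of_mem hU] at htest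
  have hcs := real_inner_le_norm fbar (U - p)
  have hyoung := two_mul_le_add_div_of_pos hτ ‖U - p‖ ‖fbar‖
  have hpol := B.add_apply_self_sub_eq_two_mul_apply_sub hsymm U p
  rw [one_div_mul_eq_div] at htest ⊢
  linarith

end Submodule

theorem stmt6_general {H : Type*} [NormedAddCommGroup H] [InnerProductSpace ℝ H]
    (V : Submodule ℝ H) [CompleteSpace V]
    (B : H →ₗ[ℝ] H →ₗ[ℝ] ℝ)
    (hsymm : ∀ x y, B x y = B y x)
    (hcoer : ∃ c : ℝ, 0 < c ∧ ∀ x, c * ‖x‖ ^ 2 ≤ B x x)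
    (um : H) (τ : ℝ) (hτ : 0 < τ) (fbar : H)
    (U : H) (hU : U ∈ V)
    (heq : ∀ W ∈ V, (1 / τ) * ⟪U - um, W⟫ + B U W = ⟪fbar, W⟫) :
    (1 / τ) * ‖U - (V.orthogonalProjectionOnto um : H)‖ ^ 2
        + B U U
        - B ((V.orthogonalProjectionOnto um : H)) ((V.orthogonalProjectionOnto um : H))
      ≤ τ * ‖fbar‖ ^ 2 ∧
    τ * ‖(1 / τ) • ((V.orthogonalProjectionOnto (U - um) : H))‖ ^ 2
        + B (U - (V.orthogonalProjectionOnto um : H)) (U - (V.orthogonalProjectionOnto um : H))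
        + B U U
        - B ((V.orthogonalProjectionOnto um : H)) ((V.orthogonalProjectionOnto um : H))
      ≤ τ * ‖fbar‖ ^ 2 := by
  simp only [← Submodule.starProjection_apply, V.starProjection_sub_of_mem hU]
  have hest := V.backwardEuler_energy_estimate B hsymm hτ hU heq
  have hnonneg : 0 ≤ B (U - V.starProjection um) (U - V.starProjection um) := by
    obtain ⟨c, hc, hcoer⟩ := hcoer
    exact le_trans (by positivity) (hcoer _)
  have hscale : τ * ‖(1 / τ) • (U - V.starProjection um)‖ ^ 2
      = (1 / τ) * ‖U - V.starProjection um‖ ^ 2 := by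
    rw [norm_smul, Real.norm_eq_abs, abs_of_pos (one_div_pos.2 hτ)]
    field_simp
  rw [hscale]
  constructor <;> linarith

/-- Energy estimate for a single backward Euler step (s = 0 case of the uniform
global energy estimate). -/
theorem stmt6 {H : Type*} [NormedAddCommGroup H] [InnerProductSpace ℝ H]
    [CompleteSpace H] (V : Submodule ℝ H) [CompleteSpace V]
    (B : H →ₗ[ℝ] H →ₗ[ℝ] ℝ)
    (hsymm : ∀ x y, B x y = B y x)
    (hcont : ∃ C : ℝ, ∀ x y, |B x y| ≤ C * ‖x‖ * ‖y‖)
    (hcoer : ∃ c : ℝ, 0 < c ∧ ∀ x, c * ‖x‖ ^ 2 ≤ B x x)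
    (um : H) (τ : ℝ) (hτ : 0 < τ) (fbar : H)
    (U : H) (hU : U ∈ V)
    (heq : ∀ W ∈ V, (1 / τ) * ⟪U - um, W⟫ + B U W = ⟪fbar, W⟫) :
    (1 / τ) * ‖U - (V.orthogonalProjectionOnto um : H)‖ ^ 2
        + B U U
        - B ((V.orthogonalProjectionOnto um : H)) ((V.orthogonalProjectionOnto um : H))
      ≤ τ * ‖fbar‖ ^ 2 ∧
    τ * ‖(1 / τ) • ((V.orthogonalProjectionOnto (U - um) : H))‖ ^ 2
        + B (U - (V.orthogonalProjectionOnto um : H)) (U - (V.orthogonalProjectionOnto um : H))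
        + B U U
        - B ((V.orthogonalProjectionOnto um : H)) ((V.orthogonalProjectionOnto um : H))
      ≤ τ * ‖fbar‖ ^ 2 :=
  stmt6_general V B hsymm hcoer um τ hτ fbar U hU heq
end

section
/- Let T > 0 and let E : {(a,b] : 0 ≤ a < b ≤ T} → [0,∞) be superadditive (E(a,c] + E(c,b] ≤ E(a,b] for a < c < b) and monotone under inclusion. Suppose there is a partition 0 = t̃_0 < ⋯ < t̃_{N_f} = T with ∑_{m=1}^{N_f} E(t̃_{m−1}, t̃_m] ≤ TOL²/2 and a number tol² ≤ TOL²/(2N_f). Then for every partition 0 = t_0 < ⋯ < t_N = T satisfying E(t_{n−1}, t_n] ≤ tol² for all n, it holds that ∑_{n=1}^N E(t_{n−1}, t_n] ≤ TOL². -/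
/-!
Split the intervals `(t n, t (n+1)]` of the partition into those that contain a reference node in
their interior and those that lie inside a single reference cell `(tref m, tref (m+1)]`. An
interior reference node lies in at most one interval, so there are at most `Nf` intervals of the
first kind, each contributing at most `tol ^ 2 ≤ TOL ^ 2 / (2 Nf)`. The intervals of the second
kind lying in a fixed cell are disjoint, so by superadditivity and monotonicity their total
contribution is at most the value of `E` on that cell; summing over the cells gives `TOL ^ 2 / 2`.
-/

open Finset

theorem StrictMonoOn.lt_add_one_of_Iic {β : Type*} [Preorder β] {t : ℕ → β} {N : ℕ}
    (ht : StrictMonoOn t (Set.Iic N)) {n : ℕ} (hn : n < N) : t n < t (n + 1) :=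
  ht (Set.mem_Iic.2 hn.le) (Set.mem_Iic.2 hn) n.lt_succ_self

theorem StrictMonoOn.le_of_Iic {β : Type*} [Preorder β] {t : ℕ → β} {N : ℕ}
    (ht : StrictMonoOn t (Set.Iic N)) {i j : ℕ} (hij : i ≤ j) (hj : j ≤ N) : t i ≤ t j :=
  ht.monotoneOn (Set.mem_Iic.2 (hij.trans hj)) (Set.mem_Iic.2 hj) hij

structure SuperadditiveOnIntervals (T : ℝ) (E : ℝ → ℝ → ℝ) : Prop where
  nonneg : ∀ a b : ℝ, 0 ≤ a → a < b → b ≤ T → 0 ≤ E a b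
  superadditive : ∀ a c b : ℝ, 0 ≤ a → a < c → c < b → b ≤ T →
    E a c + E c b ≤ E a b
  mono : ∀ a a' b' b : ℝ, 0 ≤ a → a ≤ a' → a' < b' → b' ≤ b → b ≤ T →
    E a' b' ≤ E a b

section Superadditive

variable {T : ℝ} {E : ℝ → ℝ → ℝ} {t : ℕ → ℝ} {N : ℕ}

theorem sum_le_of_subintervals (hE : SuperadditiveOnIntervals T E)
    (ht : StrictMonoOn t (Set.Iic N)) {a : ℝ} (ha : 0 ≤ a) (s : Finset ℕ) :
    ∀ b, a < b → b ≤ T → (∀ n ∈ s, n < N ∧ a ≤ t n ∧ t (n + 1) ≤ b) →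
      ∑ n ∈ s, E (t n) (t (n + 1)) ≤ E a b := by
  induction s using Finset.induction_on_max with
  | empty => exact fun b hab hbT _ => by simpa using hE.nonneg a b ha hab hbT
  | insert n s hlt ih =>
    intro b hab hbT hs
    obtain ⟨hnN, han, hnb⟩ := hs n (mem_insert_self n s)
    have hn : t n < t (n + 1) := ht.lt_add_one_of_Iic hnN
    rw [sum_insert fun hns => (hlt n hns).false]
    rcases s.eq_empty_or_nonempty with rfl | ⟨k, hk⟩
    · simpa using hE.mono a (t n) (t (n + 1)) b ha han hn hnb hbT
    have hs' : ∀ k ∈ s, k < N ∧ a ≤ t k ∧ t (k + 1) ≤ t n := fun k hk =>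
      have hkn := hlt k hk
      ⟨hkn.trans hnN, (hs k (mem_insert_of_mem hk)).2.1, ht.le_of_Iic hkn hnN.le⟩
    have hat : a < t n := by
      obtain ⟨hkN, hak, hkn⟩ := hs' k hk
      have hk : t k < t (k + 1) := ht.lt_add_one_of_Iic hkN
      exact hak.trans_lt (hk.trans_le hkn)
    calc E (t n) (t (n + 1)) + ∑ k ∈ s, E (t k) (t (k + 1))
        ≤ E (t n) (t (n + 1)) + E a (t n) := by
          gcongr
          exact ih _ hat (by linarith) hs'
      _ ≤ E a (t (n + 1)) := by
          linarith [hE.superadditive a (t n) (t (n + 1)) ha hat hn (hnb.trans hbT)]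
      _ ≤ E a b := hE.mono a a _ b ha le_rfl (hat.trans hn) hnb hbT

theorem exists_mem_Ioo_or_exists_le_and_le (f : ℕ → ℝ) {M : ℕ} {x y : ℝ}
    (hx : f 0 ≤ x) (hxy : x < y) (hy : y ≤ f M) :
    (∃ m < M, f m ∈ Set.Ioo x y) ∨ ∃ m < M, f m ≤ x ∧ y ≤ f (m + 1) := by
  classical
  have hex : ∃ m, y ≤ f m := ⟨M, hy⟩
  obtain ⟨k, hk⟩ : ∃ k, Nat.find hex = k + 1 := Nat.exists_eq_succ_of_ne_zero fun h0 => by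
    have := Nat.find_spec hex
    rw [h0] at this
    linarith
  have hkM : k < M := by
    have := Nat.find_min' hex hy
    omega
  have hfk : f k < y := lt_of_not_ge (Nat.find_min hex (by omega))
  have hyk : y ≤ f (k + 1) := hk ▸ Nat.find_spec hex
  by_cases hkx : f k ≤ x
  · exact Or.inr ⟨k, hkM, hkx, hyk⟩
  · exact Or.inl ⟨k, hkM, lt_of_not_ge hkx, hfk⟩

theorem not_lt_of_mem_Ioo_of_mem_Ioo (ht : StrictMonoOn t (Set.Iic N)) {n n' : ℕ}
    (hn' : n' ≤ N) {x : ℝ} (hx : x ∈ Set.Ioo (t n) (t (n + 1)))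
    (hx' : x ∈ Set.Ioo (t n') (t (n' + 1))) :
    ¬ n < n' := fun hlt =>
  (hx.2.trans_le (ht.le_of_Iic hlt hn')).not_gt hx'.1

theorem card_filter_exists_mem_Ioo_le (ht : StrictMonoOn t (Set.Iic N)) (f : ℕ → ℝ)
    (M : ℕ) :
    #{n ∈ range N | ∃ m < M, f m ∈ Set.Ioo (t n) (t (n + 1))} ≤ M := by
  set S := {n ∈ range N | ∃ m < M, f m ∈ Set.Ioo (t n) (t (n + 1))}
  choose! g hgM hg using fun n (hn : n ∈ S) => (mem_filter.1 hn).2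
  have hN : ∀ n ∈ S, n ≤ N := fun n hn => (mem_range.1 (mem_filter.1 hn).1).le
  have hinj : Set.InjOn g S := fun n hn n' hn' hg' =>
    le_antisymm
      (not_lt.1 (not_lt_of_mem_Ioo_of_mem_Ioo ht (hN n hn) (hg' ▸ hg n' hn') (hg n hn)))
      (not_lt.1 (not_lt_of_mem_Ioo_of_mem_Ioo ht (hN n' hn') (hg n hn) (hg' ▸ hg n' hn')))
  simpa using card_le_card_of_injOn g (fun n hn => mem_range.2 (hgM n hn)) hinj

theorem sum_filter_not_exists_mem_Ioo_le (hE : SuperadditiveOnIntervals T E)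
    {f : ℕ → ℝ} {M : ℕ} (hf : StrictMonoOn f (Set.Iic M)) (hf0 : f 0 = 0) (hfM : f M = T)
    (ht : StrictMonoOn t (Set.Iic N)) (ht0 : t 0 = 0) (htN : t N = T) :
    ∑ n ∈ range N with ¬ ∃ m < M, f m ∈ Set.Ioo (t n) (t (n + 1)), E (t n) (t (n + 1)) ≤
      ∑ m ∈ range M, E (f m) (f (m + 1)) := by
  have hcell : ∀ n ∈ {n ∈ range N | ¬ ∃ m < M, f m ∈ Set.Ioo (t n) (t (n + 1))},
      n < N ∧ ∃ m < M, f m ≤ t n ∧ t (n + 1) ≤ f (m + 1) := by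
    intro n hn
    obtain ⟨hnN, hnot⟩ := mem_filter.1 hn
    have hnN := mem_range.1 hnN
    refine ⟨hnN, (exists_mem_Ioo_or_exists_le_and_le f ?_ ?_ ?_).resolve_left hnot⟩
    · exact hf0 ▸ ht0 ▸ ht.le_of_Iic n.zero_le hnN.le
    · exact ht.lt_add_one_of_Iic hnN
    · exact hfM ▸ htN ▸ ht.le_of_Iic hnN le_rfl
  choose! g hgM hg using fun n hn => (hcell n hn).2
  rw [← sum_fiberwise_of_maps_to fun n hn => mem_range.2 (hgM n hn)]
  refine sum_le_sum fun m hm => ?_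
  have hmM := mem_range.1 hm
  refine sum_le_of_subintervals hE ht ?_ _ _ (hf.lt_add_one_of_Iic hmM)
    (hfM ▸ hf.le_of_Iic hmM le_rfl) fun n hn => ?_
  · exact hf0 ▸ hf.le_of_Iic m.zero_le hmM.le
  · obtain ⟨hnC, rfl⟩ := mem_filter.1 hn
    exact ⟨(hcell n hnC).1, hg n hnC⟩

end Superadditive

theorem stmt14_general (T : ℝ)
    (E : ℝ → ℝ → ℝ)
    (hEnonneg : ∀ a b : ℝ, 0 ≤ a → a < b → b ≤ T → 0 ≤ E a b)
    (hsuper : ∀ a c b : ℝ, 0 ≤ a → a < c → c < b → b ≤ T → E a c + E c b ≤ E a b)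
    (hmono : ∀ a a' b' b : ℝ, 0 ≤ a → a ≤ a' → a' < b' → b' ≤ b → b ≤ T →
      E a' b' ≤ E a b)
    (TOL tol : ℝ)
    (Nf : ℕ) (hNf : 0 < Nf) (tref : ℕ → ℝ)
    (htref0 : tref 0 = 0) (htrefN : tref Nf = T)
    (htrefmono : ∀ m < Nf, tref m < tref (m + 1))
    (href : ∑ m ∈ Finset.range Nf, E (tref m) (tref (m + 1)) ≤ TOL ^ 2 / 2)
    (htol : tol ^ 2 ≤ TOL ^ 2 / (2 * Nf))
    (N : ℕ) (t : ℕ → ℝ) (ht0 : t 0 = 0) (htN : t N = T)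
    (htmono : ∀ n < N, t n < t (n + 1))
    (hloc : ∀ n < N, E (t n) (t (n + 1)) ≤ tol ^ 2) :
    ∑ n ∈ Finset.range N, E (t n) (t (n + 1)) ≤ TOL ^ 2 := by
  have ht : StrictMonoOn t (Set.Iic N) := strictMonoOn_Iic_of_lt_succ fun n hn => by
    simpa using htmono n hn
  have htref : StrictMonoOn tref (Set.Iic Nf) := strictMonoOn_Iic_of_lt_succ fun m hm => by
    simpa using htrefmono m hm
  rw [← sum_filter_not_add_sum_filter (range N)
    fun n => ∃ m < Nf, tref m ∈ Set.Ioo (t n) (t (n + 1))]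
  have hcontained := sum_filter_not_exists_mem_Ioo_le ⟨hEnonneg, hsuper, hmono⟩
    htref htref0 htrefN ht ht0 htN
  have hstraddling : ∑ n ∈ range N with ∃ m < Nf, tref m ∈ Set.Ioo (t n) (t (n + 1)),
      E (t n) (t (n + 1)) ≤ Nf * tol ^ 2 := calc
    _ ≤ #{n ∈ range N | ∃ m < Nf, tref m ∈ Set.Ioo (t n) (t (n + 1))} • tol ^ 2 :=
      sum_le_card_nsmul _ _ _ fun n hn => hloc n (mem_range.1 (mem_filter.1 hn).1)
    _ ≤ Nf * tol ^ 2 := by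
      rw [nsmul_eq_mul]
      gcongr
      exact card_filter_exists_mem_Ioo_le ht tref Nf
  have htol' : Nf * tol ^ 2 ≤ TOL ^ 2 / 2 := by
    rw [le_div_iff₀ (by positivity)] at htol
    linarith
  linarith

/-- Abstract form of the implication (Cons:ineq) in Lemma `termination-tolfind`. -/
theorem stmt14 (T : ℝ) (hT : 0 < T)
    (E : ℝ → ℝ → ℝ)
    (hEnonneg : ∀ a b : ℝ, 0 ≤ a → a < b → b ≤ T → 0 ≤ E a b)
    (hsuper : ∀ a c b : ℝ, 0 ≤ a → a < c → c < b → b ≤ T → E a c + E c b ≤ E a b)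
    (hmono : ∀ a a' b' b : ℝ, 0 ≤ a → a ≤ a' → a' < b' → b' ≤ b → b ≤ T →
      E a' b' ≤ E a b)
    (TOL tol : ℝ)
    (Nf : ℕ) (hNf : 0 < Nf) (tref : ℕ → ℝ)
    (htref0 : tref 0 = 0) (htrefN : tref Nf = T)
    (htrefmono : ∀ m < Nf, tref m < tref (m + 1))
    (href : ∑ m ∈ Finset.range Nf, E (tref m) (tref (m + 1)) ≤ TOL ^ 2 / 2)
    (htol : tol ^ 2 ≤ TOL ^ 2 / (2 * Nf))
    (N : ℕ) (t : ℕ → ℝ) (ht0 : t 0 = 0) (htN : t N = T)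
    (htmono : ∀ n < N, t n < t (n + 1))
    (hloc : ∀ n < N, E (t n) (t (n + 1)) ≤ tol ^ 2) :
    ∑ n ∈ Finset.range N, E (t n) (t (n + 1)) ≤ TOL ^ 2 :=
  stmt14_general T E hEnonneg hsuper hmono TOL tol Nf hNf tref htref0 htrefN htrefmono href htol N t
    ht0 htN htmono hloc
end
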